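/- For n = 2, 4, 6, the polynomial P_n^{(1)}(r) - P_n^{(2)}(r) has all coefficients positive, where P_n^{(1)}(r) = (1 + r/n)^(n/2) and P_n^{(2)}(r) = (1/√e)·Σ_{i=0}^{n/2 - 1} (1+r)ⁱ/(2ⁱ i!). In particular, P_n^{(2)}(r) < P_n^{(1)}(r) for every r ≥ 0 when n ∈ {2,4,6}. -/

import Mathlib

open Polynomial

/-- `P_n^{(1)}(r) = (1 + r/n)^{n/2}` as a polynomial in `r`. -/
noncomputable def P1 (n : ℕ) : Polynomial ℝ :=
  (C 1 + C ((n : ℝ)⁻¹) * X) ^ (n / 2)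

/-- `P_n^{(2)}(r) = (1/√e) ∑_{i=0}^{n/2-1} (1+r)ⁱ/(2ⁱ i!)` as a polynomial in `r`. -/
noncomputable def P2 (n : ℕ) : Polynomial ℝ :=
  C (Real.sqrt (Real.exp 1))⁻¹ *
    ∑ i ∈ Finset.range (n / 2), C ((2 ^ i * i.factorial : ℝ))⁻¹ * (1 + X) ^ i

/-!
By the binomial theorem the `j`-th coefficient of `P1 n` is `C(n/2, j) n⁻ʲ` and that of `P2 n` is
`e^{-1/2} ∑_{i < n/2} C(i, j) / (2ⁱ i!)`. For `n ≤ 6` each difference is a rational affine function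
of `e^{-1/2}`, positive as soon as `e^{-1/2} < 8/13`, i.e. `√e > 13/8`, which follows from
`e > 2.7182818`. Since `P1 n - P2 n` has degree at most `n/2`, positivity of all its coefficients
makes it positive on `[0, ∞)`.
-/

theorem Polynomial.coeff_one_add_C_mul_X_pow {R : Type*} [CommSemiring R] (a : R) (m j : ℕ) :
    ((1 + C a * X) ^ m).coeff j = m.choose j * a ^ j := by
  rw [add_comm, add_pow, finsetSum_coeff]
  simp only [one_pow, mul_one, mul_pow, ← C_pow, ← C_eq_natCast, mul_right_comm _ _ (C _), ← C_mul,
    coeff_C_mul_X_pow]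
  rw [Finset.sum_ite_eq]
  split_ifs with h
  · ring
  · rw [Nat.choose_eq_zero_of_lt (by simpa using h), Nat.cast_zero, zero_mul]

theorem Polynomial.eval_pos_of_forall_coeff_pos {p : ℝ[X]} {N : ℕ} (hdeg : p.natDegree ≤ N)
    (hcoeff : ∀ j ≤ N, 0 < p.coeff j) {r : ℝ} (hr : 0 ≤ r) : 0 < p.eval r := by
  rw [eval_eq_sum_range' (Nat.lt_succ_of_le hdeg)]
  refine Finset.sum_pos' (fun j hj => ?_) ⟨0, by simp, by simpa using hcoeff 0 (Nat.zero_le _)⟩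
  exact mul_nonneg (hcoeff j (Nat.lt_succ_iff.1 (Finset.mem_range.1 hj))).le (pow_nonneg hr j)

lemma coeff_P1 (n j : ℕ) : (P1 n).coeff j = (n / 2).choose j * ((n : ℝ)⁻¹) ^ j := by
  rw [P1, map_one, coeff_one_add_C_mul_X_pow]

lemma coeff_P2 (n j : ℕ) : (P2 n).coeff j =
    (√(Real.exp 1))⁻¹ * ∑ i ∈ Finset.range (n / 2), (i.choose j : ℝ) / (2 ^ i * i.factorial) := by
  simp only [P2, coeff_C_mul, finsetSum_coeff, coeff_one_add_X_pow, div_eq_inv_mul]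

lemma natDegree_P1_le (n : ℕ) : (P1 n).natDegree ≤ n / 2 := by
  unfold P1
  refine (natDegree_pow_le_of_le (m := 1) _ ?_).trans (mul_one _).le
  compute_degree

lemma natDegree_P2_le (n : ℕ) : (P2 n).natDegree ≤ n / 2 := by
  unfold P2
  refine (natDegree_C_mul_le _ _).trans (natDegree_sum_le_of_forall_le _ _ fun i hi => ?_)
  refine (natDegree_C_mul_le _ _).trans ((natDegree_pow_le_of_le (m := 1) i ?_).trans ?_)
  · compute_degree
  · simpa using (Finset.mem_range.1 hi).le

lemma inv_sqrt_exp_one_lt : (√(Real.exp 1))⁻¹ < 8 / 13 := by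
  rw [inv_lt_comm₀ (by positivity) (by norm_num), Real.lt_sqrt (by norm_num)]
  linarith [Real.exp_one_gt_d9]

theorem stmt_15 (n : ℕ) (hn : n = 2 ∨ n = 4 ∨ n = 6) :
    (∀ j : ℕ, j ≤ n / 2 → 0 < (P1 n - P2 n).coeff j) ∧
    (∀ r : ℝ, 0 ≤ r → (P2 n).eval r < (P1 n).eval r) := by
  have hcoeff : ∀ j ≤ n / 2, 0 < (P1 n - P2 n).coeff j := by
    have hc := inv_sqrt_exp_one_lt
    have hc0 : 0 < (√(Real.exp 1))⁻¹ := by positivity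
    rcases hn with rfl | rfl | rfl <;> intro j hj <;> norm_num at hj <;> interval_cases j <;>
      norm_num [coeff_P1, coeff_P2, Finset.sum_range_succ, Nat.choose] <;> linarith
  have hdeg : (P1 n - P2 n).natDegree ≤ n / 2 :=
    (natDegree_sub_le _ _).trans (max_le (natDegree_P1_le n) (natDegree_P2_le n))
  refine ⟨hcoeff, fun r hr => ?_⟩
  simpa using eval_pos_of_forall_coeff_pos hdeg hcoeff hr
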